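/- Let d, w₁, w₂, w₃ be odd positive integers, χ : ℤ → ℂ be d-periodic, ξ ∈ ℂ with appropriate nonvanishing conditions. Then for all n ≥ 0 and y₁ ∈ ℂ: w₁ⁿ ∑_{k=0}^{n} C(n,k) ∑_{a=0}^{w₁d−1} (−1)^a χ(a) ξ^{a w₂ w₃} E_{k,χ,ξ^{w₁w₃}}(w₂y₁ + (w₂/w₁)a) T_{n−k}(w₃d−1;χ,ξ^{w₁w₂}) w₂^{n−k} w₃^{k} is invariant under all six permutations of (w₁,w₂,w₃). -/

import Mathlib

open Finset PowerSeries

/-!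
`E` and `T` are coefficients of exponential generating functions, so `S(w₁, w₂, w₃) / n!` is the
`n`-th coefficient of a product of rescaled generating functions. Write
`D_m(t) = ξ^{dm} e^{dmt} + 1` and `Q_m(t) = ∑_{a<d} (-1)^a χ(a) ξ^{ma} e^{mat}`. Because `χ` is
`d`-periodic and `d`, `w₁` are odd, the sum over the `w₁ d` values of `a` is a geometric series
in `-ξ^{d w₂w₃} e^{d w₂w₃ t}` and collapses to `D_{w₁w₂w₃} Q_{w₂w₃} / D_{w₂w₃}`; the same happens
to `T` because `w₃` is odd. The product becomes
`2 e^{w₁w₂w₃ y₁ t} D_{w₁w₂w₃}² ∏_{i<j} Q_{wᵢwⱼ} / D_{wᵢwⱼ}`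
(with `Q_m / D_m = eulerFactor d χ ξ m`), visibly symmetric in the `wᵢ`.
-/

/-- Generating function of the generalized twisted Euler polynomials:
`2 e^{xt} (ξ^d e^{dt}+1)⁻¹ ∑_{a=0}^{d-1} (-1)^a χ(a) ξ^a e^{at}` in `ℂ[[t]]`. -/
noncomputable def Egf (d : ℕ) (χ : ℤ → ℂ) (ξ x : ℂ) : PowerSeries ℂ :=
  2 * rescale x (exp ℂ) * (ξ ^ d • rescale (d : ℂ) (exp ℂ) + 1)⁻¹ *
    ∑ a ∈ Finset.range d, ((-1 : ℂ) ^ a * χ a * ξ ^ a) • rescale (a : ℂ) (exp ℂ)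

/-- The generalized twisted Euler polynomial `E_{n,χ,ξ}(x)`. -/
noncomputable def E (d : ℕ) (χ : ℤ → ℂ) (ξ x : ℂ) (n : ℕ) : ℂ :=
  (n.factorial : ℂ) * PowerSeries.coeff n (Egf d χ ξ x)

/-- The alternating generalized twisted power sum `T_k(m; χ, ξ)`. -/
noncomputable def T (m : ℕ) (χ : ℤ → ℂ) (ξ : ℂ) (k : ℕ) : ℂ :=
  ∑ a ∈ Finset.range (m + 1), (-1 : ℂ) ^ a * χ a * ξ ^ a * (a : ℂ) ^ k


/-- The expression of Theorem 5, as a function of `(w₁, w₂, w₃) = (u, v, w)`. -/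
noncomputable def S (d : ℕ) (χ : ℤ → ℂ) (ξ : ℂ) (n : ℕ) (y₁ : ℂ)
    (u v w : ℕ) : ℂ :=
  (u : ℂ) ^ n * ∑ k ∈ Finset.range (n + 1), (n.choose k : ℂ) *
    (∑ a ∈ Finset.range (u * d), (-1 : ℂ) ^ a * χ a * ξ ^ (a * v * w) *
      E d χ (ξ ^ (u * w)) ((v : ℂ) * y₁ + (v : ℂ) / (u : ℂ) * (a : ℂ)) k) *
    T (w * d - 1) χ (ξ ^ (u * v)) (n - k) *
    (v : ℂ) ^ (n - k) * (w : ℂ) ^ k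

namespace PowerSeries

section CommSemiring

variable {R : Type*} [CommSemiring R]

theorem rescale_smul (c a : R) (f : R⟦X⟧) : rescale c (a • f) = a • rescale c f := by
  ext n
  simp only [coeff_rescale, coeff_smul, smul_eq_mul, mul_left_comm]

theorem constantCoeff_rescale (c : R) (f : R⟦X⟧) :
    constantCoeff (rescale c f) = constantCoeff f := by
  rw [← coeff_zero_eq_constantCoeff_apply, coeff_rescale, pow_zero, one_mul,
    coeff_zero_eq_constantCoeff_apply]

theorem factorial_mul_coeff_rescale_mul_rescale (f g : R⟦X⟧) (p q : R) (n : ℕ) :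
    n.factorial * coeff n (rescale p f * rescale q g) =
      ∑ k ∈ range (n + 1), n.choose k * (k.factorial * coeff k f) *
        ((n - k).factorial * coeff (n - k) g) * p ^ k * q ^ (n - k) := by
  rw [coeff_mul, Nat.sum_antidiagonal_eq_sum_range_succ_mk, mul_sum]
  refine sum_congr rfl fun k hk => ?_
  have hkn : k ≤ n := Nat.lt_succ_iff.mp (mem_range.mp hk)
  rw [coeff_rescale, coeff_rescale, ← Nat.choose_mul_factorial_mul_factorial hkn]
  push_cast
  ring

end CommSemiring

theorem rescale_exp_pow {A : Type*} [CommRing A] [Algebra ℚ A] (c : A) (j : ℕ) :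
    rescale c (exp A) ^ j = rescale (j * c) (exp A) := by
  rw [← map_pow, exp_pow_eq_rescale_exp, rescale_rescale]

theorem rescale_inv {k : Type*} [Field k] (c : k) (f : k⟦X⟧) :
    rescale c f⁻¹ = (rescale c f)⁻¹ := by
  by_cases hf : constantCoeff f = 0
  · rw [inv_eq_zero.2 hf, inv_eq_zero.2 (by rwa [constantCoeff_rescale]), map_zero]
  · rw [eq_inv_iff_mul_eq_one (by rwa [constantCoeff_rescale]), ← map_mul,
      PowerSeries.inv_mul_cancel _ hf, map_one]

end PowerSeries

noncomputable def twistedExpSum (N : ℕ) (χ : ℤ → ℂ) (η c : ℂ) : ℂ⟦X⟧ :=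
  ∑ a ∈ range N, ((-1 : ℂ) ^ a * χ a * η ^ a) • rescale (a * c) (exp ℂ)

noncomputable def eulerDenom (d : ℕ) (η c : ℂ) : ℂ⟦X⟧ :=
  η ^ d • rescale (d * c) (exp ℂ) + 1

section TwistedExpSum

variable {d N : ℕ} {χ : ℤ → ℂ} {η : ℂ}

theorem Egf_eq (x : ℂ) :
    Egf d χ η x = 2 * rescale x (exp ℂ) * (eulerDenom d η 1)⁻¹ * twistedExpSum d χ η 1 := by
  simp only [Egf, eulerDenom, twistedExpSum, mul_one]

theorem rescale_twistedExpSum (c c' : ℂ) :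
    rescale c' (twistedExpSum N χ η c) = twistedExpSum N χ η (c * c') := by
  simp only [twistedExpSum, map_sum, rescale_smul, rescale_rescale, mul_assoc]

theorem rescale_eulerDenom (c c' : ℂ) :
    rescale c' (eulerDenom d η c) = eulerDenom d η (c * c') := by
  simp only [eulerDenom, map_add, map_one, rescale_smul, rescale_rescale, mul_assoc]

theorem rescale_Egf (x c : ℂ) :
    rescale c (Egf d χ η x) =
      2 * rescale (x * c) (exp ℂ) * (eulerDenom d η c)⁻¹ * twistedExpSum d χ η c := by
  rw [Egf_eq, map_mul, map_mul, map_mul, map_ofNat, rescale_rescale, rescale_inv,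
    rescale_eulerDenom, rescale_twistedExpSum, one_mul]

theorem constantCoeff_eulerDenom (c : ℂ) : constantCoeff (eulerDenom d η c) = η ^ d + 1 := by
  simp [eulerDenom, constantCoeff_rescale]

theorem twistedExpSum_mul_eq_geom_sum_mul (hd : Odd d) (hχ : Function.Periodic χ d) (u : ℕ)
    (c : ℂ) :
    twistedExpSum (u * d) χ η c =
      (∑ j ∈ range u, (-(η ^ d • rescale (d * c) (exp ℂ))) ^ j) * twistedExpSum d χ η c := by
  induction u with
  | zero => simp [twistedExpSum]
  | succ u ih =>
    rw [Nat.succ_mul, sum_range_succ, add_mul, ← ih]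
    unfold twistedExpSum
    rw [Finset.sum_range_add, mul_sum]
    congr 1
    refine sum_congr rfl fun a _ => ?_
    have hχa : χ ((u * d + a : ℕ) : ℤ) = χ a := by
      simpa [add_comm] using hχ.nat_mul u a
    have hsign : (-1 : ℂ) ^ (u * d + a) = (-1) ^ u * (-1) ^ a := by
      rw [pow_add, mul_comm u d, pow_mul, hd.neg_one_pow]
    have hgeom : (-(η ^ d • rescale (d * c) (exp ℂ))) ^ u =
        ((-1) ^ u * η ^ (u * d)) • rescale ((u * d : ℕ) * c) (exp ℂ) := by
      rw [← neg_smul, smul_pow, rescale_exp_pow, neg_pow, ← pow_mul, mul_comm d u]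
      push_cast
      ring_nf
    rw [hgeom, smul_mul_smul_comm, exp_mul_exp_eq_exp_add, hχa, hsign, pow_add,
      show ((u * d + a : ℕ) : ℂ) * c = (u * d : ℕ) * c + a * c by push_cast; ring]
    congr 1
    ring

theorem eulerDenom_mul_twistedExpSum_mul (hd : Odd d) (hχ : Function.Periodic χ d) {u : ℕ}
    (hu : Odd u) (c : ℂ) :
    eulerDenom d η c * twistedExpSum (u * d) χ η c =
      eulerDenom d (η ^ u) (u * c) * twistedExpSum d χ η c := by
  set x := η ^ d • rescale (d * c) (exp ℂ)
  have hxu : eulerDenom d (η ^ u) (u * c) = x ^ u + 1 := by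
    rw [eulerDenom, smul_pow, rescale_exp_pow, ← pow_mul, ← pow_mul, mul_comm u d]
    ring_nf
  have hgeom : (x + 1) * ∑ j ∈ range u, (-x) ^ j = x ^ u + 1 := by
    linear_combination -(geom_sum_mul (-x) u) - hu.neg_pow x
  rw [twistedExpSum_mul_eq_geom_sum_mul hd hχ, ← mul_assoc, hxu, eulerDenom, ← hgeom]

theorem T_eq_factorial_mul_coeff (m : ℕ) (k : ℕ) :
    T m χ η k = k.factorial * coeff k (twistedExpSum (m + 1) χ η 1) := by
  simp only [T, twistedExpSum, map_sum, mul_sum, coeff_smul, coeff_rescale, coeff_exp, mul_one]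
  refine sum_congr rfl fun a _ => ?_
  have hk : (k.factorial : ℂ) ≠ 0 := Nat.cast_ne_zero.2 k.factorial_ne_zero
  rw [smul_eq_mul, map_div₀, map_one, map_natCast]
  field_simp

end TwistedExpSum

noncomputable def eulerFactor (d : ℕ) (χ : ℤ → ℂ) (ξ : ℂ) (m : ℕ) : ℂ⟦X⟧ :=
  (eulerDenom d (ξ ^ m) m)⁻¹ * twistedExpSum d χ (ξ ^ m) m

noncomputable def symmetricGF (d : ℕ) (χ : ℤ → ℂ) (ξ y₁ : ℂ) (u v w : ℕ) : ℂ⟦X⟧ :=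
  2 * rescale (((u * v * w : ℕ) : ℂ) * y₁) (exp ℂ) *
    eulerDenom d (ξ ^ (u * v * w)) (u * v * w : ℕ) ^ 2 *
    (eulerFactor d χ ξ (u * v) * eulerFactor d χ ξ (u * w) * eulerFactor d χ ξ (v * w))

section SymmetricForm

variable {d : ℕ} {χ : ℤ → ℂ} {ξ : ℂ}

theorem twistedExpSum_odd_mul_eq (hd : Odd d) (hχ : Function.Periodic χ d) {u m : ℕ}
    (hu : Odd u) (hm : ξ ^ (d * m) + 1 ≠ 0) :
    twistedExpSum (u * d) χ (ξ ^ m) m =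
      eulerDenom d (ξ ^ (u * m)) (u * m : ℕ) * eulerFactor d χ ξ m := by
  have hD : constantCoeff (eulerDenom d (ξ ^ m) m) ≠ 0 := by
    rwa [constantCoeff_eulerDenom, ← pow_mul, mul_comm]
  calc twistedExpSum (u * d) χ (ξ ^ m) m
      = (eulerDenom d (ξ ^ m) m)⁻¹ *
          (eulerDenom d (ξ ^ m) m * twistedExpSum (u * d) χ (ξ ^ m) m) := by
        rw [← mul_assoc, PowerSeries.inv_mul_cancel _ hD, one_mul]
    _ = (eulerDenom d (ξ ^ m) m)⁻¹ *
          (eulerDenom d (ξ ^ (u * m)) (u * m : ℕ) * twistedExpSum d χ (ξ ^ m) m) := by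
        rw [eulerDenom_mul_twistedExpSum_mul hd hχ hu, ← pow_mul, mul_comm m u, Nat.cast_mul]
    _ = _ := by
        rw [eulerFactor]
        ring

theorem S_eq_factorial_mul_coeff (n : ℕ) (y₁ : ℂ) (u v w : ℕ) (hwd : 0 < w * d) :
    S d χ ξ n y₁ u v w = n.factorial * coeff n
      (rescale ((u * w : ℕ) : ℂ) (∑ a ∈ range (u * d), ((-1 : ℂ) ^ a * χ a * ξ ^ (a * v * w)) •
          Egf d χ (ξ ^ (u * w)) ((v : ℂ) * y₁ + (v : ℂ) / (u : ℂ) * (a : ℂ))) *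
        twistedExpSum (w * d) χ (ξ ^ (u * v)) (u * v : ℕ)) := by
  set F := ∑ a ∈ range (u * d), ((-1 : ℂ) ^ a * χ a * ξ ^ (a * v * w)) •
    Egf d χ (ξ ^ (u * w)) ((v : ℂ) * y₁ + (v : ℂ) / (u : ℂ) * (a : ℂ)) with hF
  rw [← one_mul ((u * v : ℕ) : ℂ), ← rescale_twistedExpSum,
    factorial_mul_coeff_rescale_mul_rescale, S, mul_sum]
  refine sum_congr rfl fun k hk => ?_
  have hE : ∑ a ∈ range (u * d), (-1 : ℂ) ^ a * χ a * ξ ^ (a * v * w) *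
        E d χ (ξ ^ (u * w)) ((v : ℂ) * y₁ + (v : ℂ) / (u : ℂ) * (a : ℂ)) k =
      k.factorial * coeff k F := by
    simp only [hF, E, map_sum, coeff_smul, smul_eq_mul, mul_sum, mul_left_comm]
  have hT := T_eq_factorial_mul_coeff (χ := χ) (η := ξ ^ (u * v)) (w * d - 1) (n - k)
  rw [Nat.sub_add_cancel hwd] at hT
  have hn : (u : ℂ) ^ n = u ^ k * u ^ (n - k) := by
    rw [← pow_add, Nat.add_sub_cancel' (Nat.lt_succ_iff.mp (mem_range.mp hk))]
  rw [hE, hT, hn, Nat.cast_mul, Nat.cast_mul, mul_pow, mul_pow]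
  ring_nf

theorem rescale_sum_smul_Egf (y₁ : ℂ) {u : ℕ} (hu : u ≠ 0) (v w : ℕ) :
    rescale ((u * w : ℕ) : ℂ) (∑ a ∈ range (u * d), ((-1 : ℂ) ^ a * χ a * ξ ^ (a * v * w)) •
        Egf d χ (ξ ^ (u * w)) ((v : ℂ) * y₁ + (v : ℂ) / (u : ℂ) * (a : ℂ))) =
      2 * rescale (((u * v * w : ℕ) : ℂ) * y₁) (exp ℂ) * eulerFactor d χ ξ (u * w) *
        twistedExpSum (u * d) χ (ξ ^ (v * w)) (v * w : ℕ) := by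
  rw [map_sum, twistedExpSum, mul_sum]
  refine sum_congr rfl fun a _ => ?_
  have hexp : ((v : ℂ) * y₁ + (v : ℂ) / (u : ℂ) * (a : ℂ)) * ((u * w : ℕ) : ℂ) =
      ((u * v * w : ℕ) : ℂ) * y₁ + a * ((v * w : ℕ) : ℂ) := by
    push_cast
    field_simp
  rw [rescale_smul, rescale_Egf, hexp, ← exp_mul_exp_eq_exp_add, eulerFactor, ← pow_mul,
    smul_eq_C_mul, smul_eq_C_mul, show a * v * w = v * w * a by ring]
  ring

theorem S_eq_factorial_mul_coeff_symmetricGF (hd : Odd d) (hχ : Function.Periodic χ d)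
    (n : ℕ) (y₁ : ℂ) {u w : ℕ} (v : ℕ) (hu : Odd u) (hw : Odd w)
    (huv : ξ ^ (d * (u * v)) + 1 ≠ 0) (hvw : ξ ^ (d * (v * w)) + 1 ≠ 0) :
    S d χ ξ n y₁ u v w = n.factorial * coeff n (symmetricGF d χ ξ y₁ u v w) := by
  rw [S_eq_factorial_mul_coeff n y₁ u v w (Nat.mul_pos hw.pos hd.pos),
    rescale_sum_smul_Egf y₁ hu.pos.ne', twistedExpSum_odd_mul_eq hd hχ hu hvw,
    twistedExpSum_odd_mul_eq hd hχ hw huv, symmetricGF, ← mul_assoc u, mul_comm w, Nat.mul_assoc]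
  congr 2
  ring

theorem symmetricGF_swap₁₂ (y₁ : ℂ) (u v w : ℕ) :
    symmetricGF d χ ξ y₁ u v w = symmetricGF d χ ξ y₁ v u w := by
  rw [symmetricGF, symmetricGF, Nat.mul_comm u v]
  ring

theorem symmetricGF_swap₂₃ (y₁ : ℂ) (u v w : ℕ) :
    symmetricGF d χ ξ y₁ u v w = symmetricGF d χ ξ y₁ u w v := by
  rw [symmetricGF, symmetricGF, Nat.mul_right_comm u v w, Nat.mul_comm v w]
  ring

end SymmetricForm

theorem apply_perm_fin_three_eq {α β : Type*} (f : α → α → α → β)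
    (h₁₂ : ∀ a b c, f a b c = f b a c) (h₂₃ : ∀ a b c, f a b c = f a c b)
    (w : Fin 3 → α) (σ : Equiv.Perm (Fin 3)) :
    f (w (σ 0)) (w (σ 1)) (w (σ 2)) = f (w 0) (w 1) (w 2) := by
  have key : ∀ i j k : Fin 3, i ≠ j → i ≠ k → j ≠ k →
      f (w i) (w j) (w k) = f (w 0) (w 1) (w 2) := by
    intro i j k
    fin_cases i <;> fin_cases j <;> fin_cases k <;> grind
  exact key _ _ _ (σ.injective.ne (by decide)) (σ.injective.ne (by decide))
    (σ.injective.ne (by decide))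

theorem theorem5_general (d : ℕ) (hd : Odd d)
    (χ : ℤ → ℂ) (hχ : Function.Periodic χ (d : ℤ)) (ξ : ℂ)
    (w : Fin 3 → ℕ) (hwodd : ∀ i, Odd (w i))
    (hξ : ∀ i j, i ≠ j → ξ ^ (d * w i * w j) + 1 ≠ 0)
    (n : ℕ) (y₁ : ℂ) (σ : Equiv.Perm (Fin 3)) :
    S d χ ξ n y₁ (w (σ 0)) (w (σ 1)) (w (σ 2)) =
      S d χ ξ n y₁ (w 0) (w 1) (w 2) := by
  have hS : ∀ i j k : Fin 3, i ≠ j → j ≠ k → S d χ ξ n y₁ (w i) (w j) (w k) =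
      n.factorial * coeff n (symmetricGF d χ ξ y₁ (w i) (w j) (w k)) := fun i j k hij hjk =>
    S_eq_factorial_mul_coeff_symmetricGF hd hχ n y₁ (w j) (hwodd i) (hwodd k)
      (by rw [← mul_assoc]; exact hξ i j hij) (by rw [← mul_assoc]; exact hξ j k hjk)
  rw [hS _ _ _ (σ.injective.ne (by decide)) (σ.injective.ne (by decide)),
    hS 0 1 2 (by decide) (by decide)]
  exact apply_perm_fin_three_eq (fun a b c => n.factorial * coeff n (symmetricGF d χ ξ y₁ a b c))
    (fun a b c => by rw [symmetricGF_swap₁₂]) (fun a b c => by rw [symmetricGF_swap₂₃]) w σ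

/-- Theorem 5: the expression is invariant under all six permutations of `(w₁,w₂,w₃)`. -/
theorem theorem5 (d : ℕ) (hd : Odd d) (hd0 : 0 < d)
    (χ : ℤ → ℂ) (hχ : Function.Periodic χ (d : ℤ)) (ξ : ℂ)
    (w : Fin 3 → ℕ) (hw : ∀ i, 0 < w i) (hwodd : ∀ i, Odd (w i))
    (hξ : ∀ i j, i ≠ j → ξ ^ (d * w i * w j) + 1 ≠ 0)
    (n : ℕ) (y₁ : ℂ) (σ : Equiv.Perm (Fin 3)) :
    S d χ ξ n y₁ (w (σ 0)) (w (σ 1)) (w (σ 2)) =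
      S d χ ξ n y₁ (w 0) (w 1) (w 2) :=
  theorem5_general d hd χ hχ ξ w hwodd hξ n y₁ σ
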